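/- arXiv:2302.11545 — 3 statements merged into one kernel-verified Lean document; each statement's English description precedes it below -/
import Mathlib

section
/- Let f : ℝ → ℝ be a smooth function satisfying f'' = -f³ on ℝ and additionally 3·(f')² = f⁴ on ℝ. Then f is identically zero. -/
/-- If a smooth `f : ℝ → ℝ` satisfies `f'' = -f³` and `3 (f')² = f⁴` on ℝ,
then `f` is identically zero. -/
theorem stmt_0 (f : ℝ → ℝ) (hf : ContDiff ℝ (⊤ : ℕ∞) f)
    (h1 : ∀ x, deriv (deriv f) x = -(f x) ^ 3)
    (h2 : ∀ x, 3 * (deriv f x) ^ 2 = (f x) ^ 4) :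
    ∀ x, f x = 0 := by
  have hfd : Differentiable ℝ f := hf.differentiable (by simp)
  have hfd' : Differentiable ℝ (deriv f) := ((contDiff_infty_iff_deriv.mp (hf.of_le (by exact_mod_cast le_top))).2).differentiable (by simp)
  intro x
  have hdf : HasDerivAt f (deriv f x) x := (hfd x).hasDerivAt
  have hdf' : HasDerivAt (deriv f) (deriv (deriv f) x) x := (hfd' x).hasDerivAt
  have hgl : HasDerivAt (fun y => 3 * (deriv f y) ^ 2)
      (3 * (2 * deriv f x ^ 1 * deriv (deriv f) x)) x :=
    (hdf'.pow 2).const_mul 3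
  have hgr : HasDerivAt (fun y => (f y) ^ 4) (4 * f x ^ 3 * deriv f x) x := hdf.pow 4
  have heq : (fun y => 3 * (deriv f y) ^ 2) = fun y => (f y) ^ 4 := funext h2
  rw [heq] at hgl
  have key : 3 * (2 * deriv f x ^ 1 * deriv (deriv f) x) = 4 * f x ^ 3 * deriv f x :=
    hgl.unique hgr
  rw [h1 x] at key
  have h3 : f x ^ 3 * deriv f x = 0 := by nlinarith [key]
  rcases mul_eq_zero.mp h3 with h | h
  · exact pow_eq_zero_iff (by norm_num) |>.mp h
  · have := h2 x
    rw [h] at this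
    have : f x ^ 4 = 0 := by linarith
    exact pow_eq_zero_iff (by norm_num) |>.mp this
end

section
/- Let α : ℝ → ℝ be smooth with α' nowhere zero, and with cos α and sin α nowhere zero. Suppose α satisfies both α''·cos α − (α')²·sin α = 0 and α'''·sin α·cos²α + cos α·(sin²α + 3)·α'·α'' + sin α·(2cos²α + 3)·(α')³ = 0. Then a contradiction follows; i.e., no such α exists. -/
open Real

/-- There is no smooth `α : ℝ → ℝ` with `α'`, `cos α`, `sin α` nowhere zero
satisfying both `α'' cos α - (α')² sin α = 0` and
`α''' sin α cos²α + cos α (sin²α + 3) α' α'' + sin α (2cos²α + 3) (α')³ = 0`. -/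
theorem stmt_2 (α : ℝ → ℝ) (hα : ContDiff ℝ (⊤ : ℕ∞) α)
    (hα' : ∀ y, deriv α y ≠ 0)
    (hcos : ∀ y, Real.cos (α y) ≠ 0)
    (hsin : ∀ y, Real.sin (α y) ≠ 0)
    (h1 : ∀ y, deriv (deriv α) y * Real.cos (α y)
        - (deriv α y) ^ 2 * Real.sin (α y) = 0)
    (h2 : ∀ y, deriv (deriv (deriv α)) y * Real.sin (α y) * (Real.cos (α y)) ^ 2
        + Real.cos (α y) * ((Real.sin (α y)) ^ 2 + 3) * deriv α y * deriv (deriv α) y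
        + Real.sin (α y) * (2 * (Real.cos (α y)) ^ 2 + 3) * (deriv α y) ^ 3 = 0) :
    False := by
  -- smoothness of derivatives
  have hαi : ContDiff ℝ (⊤ : ℕ∞) α := hα.of_le (by simp)
  have hα0 : Differentiable ℝ α := hαi.differentiable (by simp)
  have hα1c : ContDiff ℝ (⊤ : ℕ∞) (deriv α) := (contDiff_infty_iff_deriv.mp hαi).2
  have hα1 : Differentiable ℝ (deriv α) := hα1c.differentiable (by simp)
  have hα2c : ContDiff ℝ (⊤ : ℕ∞) (deriv (deriv α)) := (contDiff_infty_iff_deriv.mp hα1c).2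
  have hα2 : Differentiable ℝ (deriv (deriv α)) := hα2c.differentiable (by simp)
  set p := deriv α 0 with hp
  set q := deriv (deriv α) 0 with hq
  set r := deriv (deriv (deriv α)) 0 with hr
  set s := Real.sin (α 0) with hs
  set c := Real.cos (α 0) with hc
  -- derivative facts at 0
  have hA : HasDerivAt α p 0 := (hα0 0).hasDerivAt
  have hA1 : HasDerivAt (deriv α) q 0 := (hα1 0).hasDerivAt
  have hA2 : HasDerivAt (deriv (deriv α)) r 0 := (hα2 0).hasDerivAt
  have hcosA : HasDerivAt (fun y => Real.cos (α y)) (-s * p) 0 := by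
    simpa [Function.comp_def] using (Real.hasDerivAt_cos (α 0)).comp 0 hA
  have hsinA : HasDerivAt (fun y => Real.sin (α y)) (c * p) 0 := by
    simpa [Function.comp_def] using (Real.hasDerivAt_sin (α 0)).comp 0 hA
  -- differentiate h1
  have hF : HasDerivAt
      (fun y => deriv (deriv α) y * Real.cos (α y) - (deriv α y) ^ 2 * Real.sin (α y))
      (r * c + q * (-s * p) - ((2 * p ^ 1 * q) * s + p ^ 2 * (c * p))) 0 := by
    exact (hA2.mul hcosA).sub (((hA1.pow 2)).mul hsinA)
  have hFzero : (fun y => deriv (deriv α) y * Real.cos (α y)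
      - (deriv α y) ^ 2 * Real.sin (α y)) = fun _ => (0 : ℝ) := funext h1
  have E3 : r * c + q * (-s * p) - ((2 * p ^ 1 * q) * s + p ^ 2 * (c * p)) = 0 := by
    have := hF.deriv
    rw [hFzero] at this
    simpa using this.symm
  have E1 := h1 0
  have E2 := h2 0
  rw [← hp, ← hq, ← hs, ← hc] at E1
  rw [← hp, ← hq, ← hr, ← hs, ← hc] at E2
  have pyth : s ^ 2 + c ^ 2 = 1 := Real.sin_sq_add_cos_sq (α 0)
  have key : p ^ 3 * s * c * (s ^ 2 + 9) = 0 := by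
    linear_combination c * E2 - s * c ^ 2 * E3 - p * c * (4 * s ^ 2 + 3) * E1
      - 3 * p ^ 3 * s * c * pyth
  have hpos : s ^ 2 + 9 > 0 := by positivity
  have := hα' 0
  have := hsin 0
  have := hcos 0
  rw [← hp] at *
  exact absurd key (by
    apply mul_ne_zero
    apply mul_ne_zero
    apply mul_ne_zero
    · exact pow_ne_zero 3 (hα' 0)
    · exact hsin 0
    · exact hcos 0
    · exact ne_of_gt hpos)
end

section
/- Let a₁¹, a₁², a₂³, a₃³ be smooth functions with (a₁¹)² + (a₁²)² = 1 and (a₂³)² + (a₃³)² = 1, let {E₁,E₂,E₃} be an orthonormal frame on a Riemannian 3-manifold with ∇_{E₁}E₁ = −fE₂, ∇_{E₁}E₂ = fE₁, and all other ∇_{E_i}E_j = 0, and define e₁ = a₁¹E₁ + a₁²E₂. If ∇_{e₁}e₁ = −f₁·e₂ for some function f₁ and some unit vector field e₂ orthogonal to e₁ whose E₃-component a₂³ is nowhere zero, and e₁ has zero E₃-component, then f₁ = 0 and ∇_{e₁}e₁ = 0. -/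
/-- Vector fields on (a chart of) `M²×ℝ` are written in components with respect
to the orthonormal frame `{E₁,E₂,E₃}` of Lemma 2.1; the Levi-Civita connection
is determined by `∇_{E₁}E₁ = -f E₂`, `∇_{E₁}E₂ = f E₁` and all other
`∇_{E_i}E_j = 0`. -/
noncomputable def nablaFrame (f : (Fin 3 → ℝ) → ℝ)
    (X Y : (Fin 3 → ℝ) → (Fin 3 → ℝ)) : (Fin 3 → ℝ) → (Fin 3 → ℝ) :=
  fun p => fderiv ℝ Y p (X p)
    + (X p 0 * Y p 0 * (-(f p))) • (![0, 1, 0] : Fin 3 → ℝ)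
    + (X p 0 * Y p 1 * f p) • (![1, 0, 0] : Fin 3 → ℝ)

/-- Frame lemma: if `e₁ = a₁¹E₁ + a₁²E₂` (so `e₁` has zero `E₃`-component),
`e₂` is a unit field orthogonal to `e₁` whose `E₃`-component is nowhere zero,
and `∇_{e₁}e₁ = -f₁ e₂`, then `f₁ = 0` and `∇_{e₁}e₁ = 0`. -/
theorem stmt_11 (f f₁ a11 a12 : (Fin 3 → ℝ) → ℝ)
    (e₂ : (Fin 3 → ℝ) → (Fin 3 → ℝ))
    (hf : ContDiff ℝ (⊤ : ℕ∞) f) (h11 : ContDiff ℝ (⊤ : ℕ∞) a11) (h12 : ContDiff ℝ (⊤ : ℕ∞) a12)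
    (he₂ : ContDiff ℝ (⊤ : ℕ∞) e₂)
    (hunit1 : ∀ p, (a11 p) ^ 2 + (a12 p) ^ 2 = 1)
    (hunit2 : ∀ p, ∑ i, (e₂ p i) ^ 2 = 1)
    (horth : ∀ p, a11 p * e₂ p 0 + a12 p * e₂ p 1 = 0)
    (ha23 : ∀ p, e₂ p 2 ≠ 0)
    (hnabla : ∀ p, nablaFrame f (fun q => ![a11 q, a12 q, 0]) (fun q => ![a11 q, a12 q, 0]) p
        = (-(f₁ p)) • e₂ p) :
    (∀ p, f₁ p = 0) ∧
    (∀ p, nablaFrame f (fun q => ![a11 q, a12 q, 0]) (fun q => ![a11 q, a12 q, 0]) p = 0) := by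
  have hY : ∀ p, DifferentiableAt ℝ (fun q => (![a11 q, a12 q, 0] : Fin 3 → ℝ)) p := by
    intro p
    apply differentiableAt_pi.2
    intro i
    fin_cases i
    · exact (h11.differentiable (by simp)).differentiableAt
    · exact (h12.differentiable (by simp)).differentiableAt
    · exact differentiableAt_const 0
  have key : ∀ p, f₁ p = 0 := by
    intro p
    have h := congrFun (hnabla p) 2
    have hcomp : (fderiv ℝ (fun q => (![a11 q, a12 q, 0] : Fin 3 → ℝ)) p
        (![a11 p, a12 p, 0])) 2 = 0 := by
      have hd := (hY p).hasFDerivAt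
      have h2 := hasFDerivAt_pi'.1 hd (2 : Fin 3)
      have hc : (fun x => (![a11 x, a12 x, 0] : Fin 3 → ℝ) 2) = fun _ => (0:ℝ) := by
        funext q; simp
      rw [hc] at h2
      have := h2.unique (hasFDerivAt_const (0:ℝ) p)
      have := congrFun (congrArg DFunLike.coe this) (![a11 p, a12 p, 0])
      simpa using this
    simp only [nablaFrame] at h
    simp only [Pi.add_apply, Pi.smul_apply, Matrix.cons_val_two, Matrix.cons_val_zero,
      Matrix.cons_val_one, Matrix.head_cons, Matrix.tail_cons, smul_eq_mul] at h
    rw [hcomp] at h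
    have : (0 : ℝ) = -(f₁ p) * e₂ p 2 := by
      simpa using h
    rcases mul_eq_zero.1 this.symm with h' | h'
    · linarith [neg_eq_zero.1 h']
    · exact absurd h' (ha23 p)
  refine ⟨key, fun p => ?_⟩
  rw [hnabla p, key p]
  simp
end
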